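/- Payment-vs-PoS tradeoff: for every instance of the facility-choice game, Δ/c(s*) ≤ 1 − (2/5)·PoS, where s* is a social-cost-minimizing assignment, Δ = Σ_i (c̃_i(s*) − c̃_i(b_i, s*_{-i})) with b_i a best response of i against s*_{-i}, and PoS = c(ŝ)/c(s*) for ŝ the best stable state. -/

import Mathlib

open Finset
open scoped Classical

variable {A F : Type*}

/-- Agents `i` and `j` are connected in assignment `s` if they use a common facility.
(Two agents both at `none` are *not* connected, per the paper's convention.) -/
def conn (s : A → Option F) (i j : A) : Prop :=
  ∃ f, s i = some f ∧ s j = some f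

/-- Agent `i`'s cost without facility prices: connection cost plus disconnection costs. -/
noncomputable def ct [Fintype A] (cc : A → Option F → ℝ) (dc : A → A → ℝ)
    (s : A → Option F) (i : A) : ℝ :=
  cc i (s i) + ∑ j ∈ Finset.univ.filter (fun j => j ≠ i ∧ ¬ conn s i j), dc i j

/-- The potential function Φ̃: total connection cost plus disconnection cost of each
unordered disconnected pair counted once (hence the factor 1/2 on the double sum). -/
noncomputable def Phi0 [Fintype A] (cc : A → Option F → ℝ) (dc : A → A → ℝ)
    (s : A → Option F) : ℝ :=
  (∑ i, cc i (s i))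
    + (1 / 2) * ∑ i, ∑ j ∈ Finset.univ.filter (fun j => j ≠ i ∧ ¬ conn s i j), dc i j

/-- Social cost with zero facility costs: each disconnected pair is counted twice. -/
noncomputable def soc [Fintype A] (cc : A → Option F → ℝ) (dc : A → A → ℝ)
    (s : A → Option F) : ℝ :=
  (∑ i, cc i (s i))
    + ∑ i, ∑ j ∈ Finset.univ.filter (fun j => j ≠ i ∧ ¬ conn s i j), dc i j

/-- Total opening cost of the facilities open (used by some agent) in `s`. -/
noncomputable def fcost [Fintype F] (fc : F → ℝ) (s : A → Option F) : ℝ :=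
  ∑ f ∈ Finset.univ.filter (fun f => ∃ i, s i = some f), fc f

/-- The potential Φ with facility costs: total opening cost of open facilities plus Φ̃. -/
noncomputable def PhiC [Fintype A] [Fintype F] (fc : F → ℝ) (cc : A → Option F → ℝ)
    (dc : A → A → ℝ) (s : A → Option F) : ℝ :=
  fcost fc s + Phi0 cc dc s

/-- Total social cost: facility opening costs plus connection costs plus each
disconnected pair counted twice. -/
noncomputable def socC [Fintype A] [Fintype F] (fc : F → ℝ) (cc : A → Option F → ℝ)
    (dc : A → A → ℝ) (s : A → Option F) : ℝ :=
  fcost fc s + soc cc dc s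

/-- A state `(s, γ)` is stable: prices are nonnegative, only paid at a used facility,
budget balanced (each open facility's cost is exactly covered), and no agent can
strictly decrease its total cost by deviating (anticipating price 0 elsewhere). -/
def Stable [Fintype A] [Fintype F] [DecidableEq A] (fc : F → ℝ) (cc : A → Option F → ℝ)
    (dc : A → A → ℝ) (s : A → Option F) (γ : A → ℝ) : Prop :=
  (∀ i, 0 ≤ γ i) ∧ (∀ i, s i = none → γ i = 0) ∧
    (∀ f, (∃ i, s i = some f) →
      ∑ i ∈ Finset.univ.filter (fun i => s i = some f), γ i = fc f) ∧
    (∀ i s', s' ≠ s i →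
      ct cc dc s i + γ i ≤ ct cc dc (Function.update s i s') i)

/-!
Let `Φ` be the opening cost of the open facilities plus `Φ̃`. A global minimizer `ŝ` of `Φ`
can be stabilized. No agent gains by moving alone. If all users of an open facility `f` left
it together, each for its best alternative (an open facility or `none`), then `f` would
close. Since they were connected to each other, `Φ̃` would rise by at most the sum of their
individual losses, so by minimality these losses cover `c(f)`. Proportional shares of `c(f)`
are then stabilizing prices. As `c ≤ 2Φ`, this gives `c(ŝ) ≤ 2Φ(x)` for every state `x`.

Against the optimum `s*`, let `x` be the state in which every agent `i` plays `b i`, or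
`none` if `b i` is a facility that is closed in `s*`. Write `B = Σ c̃_i(x_i, s*_{-i})`,
`C` for the connection cost of `s*` and `D` for its disconnection cost. A pair disconnected
in `x` is disconnected after one of its two single moves or in `s*`, so `Φ̃(x) ≤ B + D/2`.
Optimality of `s*` against single moves gives `C + 2D ≤ 2B`. Hence, with `F` the opening
cost of `s*`, `Φ(x)` (if `2D ≤ F + B`) or `Φ(s*)` (otherwise) is at most
`(5/4)(F + B) ≤ (5/4)(c(s*) − Δ)`, and then `c(ŝ) ≤ (5/2)(c(s*) − Δ)`.
-/

open Function

lemma conn_comm {s : A → Option F} {i j : A} : conn s i j ↔ conn s j i :=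
  ⟨fun ⟨f, hi, hj⟩ => ⟨f, hj, hi⟩, fun ⟨f, hi, hj⟩ => ⟨f, hj, hi⟩⟩

lemma conn_congr {s s' : A → Option F} {i j : A} (hi : s i = s' i) (hj : s j = s' j) :
    conn s i j ↔ conn s' i j := by
  simp only [conn, hi, hj]

lemma conn_of_conn_update [DecidableEq A] {σ x : A → Option F} {k j : A} (hkj : k ≠ j)
    (hk : conn (update σ k (x k)) k j) (hj : conn (update σ j (x j)) j k) (h : conn σ k j) :
    conn x k j := by
  obtain ⟨f, hxk, hσj⟩ := hk
  obtain ⟨g, hxj, hσk⟩ := hj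
  obtain ⟨e, hσk', hσj'⟩ := h
  rw [update_self] at hxk hxj
  rw [update_of_ne hkj.symm] at hσj
  rw [update_of_ne hkj] at hσk
  obtain rfl : f = e := Option.some_inj.1 (hσj.symm.trans hσj')
  obtain rfl : g = f := Option.some_inj.1 (hσk.symm.trans hσk')
  exact ⟨g, hxk, hxj⟩

noncomputable def pairDisc (dc : A → A → ℝ) (s : A → Option F) (i j : A) : ℝ :=
  if j ≠ i ∧ ¬ conn s i j then dc i j else 0

section PairDisc

variable {dc : A → A → ℝ}

lemma pairDisc_self (s : A → Option F) (i : A) : pairDisc dc s i i = 0 := by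
  simp [pairDisc]

lemma pairDisc_of_conn {s : A → Option F} {i j : A} (h : conn s i j) : pairDisc dc s i j = 0 :=
  if_neg fun h' => h'.2 h

lemma pairDisc_of_not_conn {s : A → Option F} {i j : A} (hij : i ≠ j) (h : ¬ conn s i j) :
    pairDisc dc s i j = dc i j :=
  if_pos ⟨hij.symm, h⟩

lemma pairDisc_nonneg (hdc : ∀ i j, 0 ≤ dc i j) (s : A → Option F) (i j : A) :
    0 ≤ pairDisc dc s i j := by
  unfold pairDisc; split_ifs <;> simp [hdc]

lemma pairDisc_le (hdc : ∀ i j, 0 ≤ dc i j) (s : A → Option F) (i j : A) :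
    pairDisc dc s i j ≤ dc i j := by
  unfold pairDisc; split_ifs <;> simp [hdc]

lemma pairDisc_comm (hsym : ∀ i j, dc i j = dc j i) (s : A → Option F) (i j : A) :
    pairDisc dc s i j = pairDisc dc s j i := by
  simp only [pairDisc, ne_comm, conn_comm, hsym i j]

lemma pairDisc_congr {s s' : A → Option F} {i j : A} (hi : s i = s' i) (hj : s j = s' j) :
    pairDisc dc s i j = pairDisc dc s' i j := by
  simp only [pairDisc, conn_congr hi hj]

lemma pairDisc_piecewise_le [DecidableEq A] (hdc : ∀ i j, 0 ≤ dc i j)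
    (hsym : ∀ i j, dc i j = dc j i) {s t : A → Option F} {U : Finset A}
    (hU : ∀ k ∈ U, ∀ l ∈ U, k ≠ l → conn s k l ∧ ¬ conn (update s k (t k)) k l)
    (k j : A) :
    pairDisc dc (U.piecewise t s) k j ≤ pairDisc dc s k j
      + (if k ∈ U then pairDisc dc (update s k (t k)) k j - pairDisc dc s k j else 0)
      + (if j ∈ U then pairDisc dc (update s j (t j)) j k - pairDisc dc s j k else 0) := by
  obtain rfl | hkj := eq_or_ne k j
  · simp [pairDisc_self]
  by_cases hk : k ∈ U <;> by_cases hj : j ∈ U <;> simp only [hk, hj, if_true, if_false]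
  · obtain ⟨hc, hnc⟩ := hU k hk j hj hkj
    obtain ⟨hc', hnc'⟩ := hU j hj k hk hkj.symm
    rw [pairDisc_of_conn hc, pairDisc_of_conn hc', pairDisc_of_not_conn hkj hnc,
      pairDisc_of_not_conn hkj.symm hnc']
    linarith [pairDisc_le hdc (U.piecewise t s) k j, hdc j k]
  · rw [pairDisc_congr (s' := update s k (t k)) (by simp [hk]) (by simp [hj, hkj.symm])]
    linarith
  · rw [pairDisc_comm hsym, pairDisc_comm hsym s k j,
      pairDisc_congr (s' := update s j (t j)) (by simp [hj]) (by simp [hk, hkj])]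
    linarith
  · rw [pairDisc_congr (s' := s) (by simp [hk]) (by simp [hj])]
    linarith

end PairDisc

noncomputable def dis [Fintype A] (dc : A → A → ℝ) (s : A → Option F) (i : A) : ℝ :=
  ∑ j, pairDisc dc s i j

section Sums

variable [Fintype A] {dc : A → A → ℝ}

lemma dis_eq_sum_filter (s : A → Option F) (i : A) :
    dis dc s i = ∑ j ∈ univ.filter (fun j => j ≠ i ∧ ¬ conn s i j), dc i j := by
  rw [dis, sum_filter]; rfl

lemma ct_eq_add_dis (cc : A → Option F → ℝ) (s : A → Option F) (i : A) :
    ct cc dc s i = cc i (s i) + dis dc s i := by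
  rw [ct, dis_eq_sum_filter]

lemma Phi0_eq_add_dis (cc : A → Option F → ℝ) (s : A → Option F) :
    Phi0 cc dc s = ∑ i, cc i (s i) + (1 / 2) * ∑ i, dis dc s i := by
  simp only [Phi0, dis_eq_sum_filter]

lemma soc_eq_add_dis (cc : A → Option F → ℝ) (s : A → Option F) :
    soc cc dc s = ∑ i, cc i (s i) + ∑ i, dis dc s i := by
  simp only [soc, dis_eq_sum_filter]

lemma soc_eq_sum_ct (cc : A → Option F → ℝ) (s : A → Option F) :
    soc cc dc s = ∑ i, ct cc dc s i := by
  simp only [soc_eq_add_dis, ct_eq_add_dis, sum_add_distrib]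

variable [DecidableEq A]

/-- A pair inside `U`, connected before, is charged once in each of its two movers'
individual changes. -/
lemma sum_dis_piecewise_le (hdc : ∀ i j, 0 ≤ dc i j) (hsym : ∀ i j, dc i j = dc j i)
    {s t : A → Option F} {U : Finset A}
    (hU : ∀ k ∈ U, ∀ l ∈ U, k ≠ l → conn s k l ∧ ¬ conn (update s k (t k)) k l) :
    ∑ k, dis dc (U.piecewise t s) k
      ≤ ∑ k, dis dc s k + 2 * ∑ k ∈ U, (dis dc (update s k (t k)) k - dis dc s k) := by
  have hrow : ∀ k, (∑ j, if k ∈ U then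
      pairDisc dc (update s k (t k)) k j - pairDisc dc s k j else 0)
        = if k ∈ U then dis dc (update s k (t k)) k - dis dc s k else 0 := by
    intro k
    split_ifs <;> simp [dis, sum_sub_distrib]
  calc ∑ k, dis dc (U.piecewise t s) k
      ≤ ∑ k, ∑ j, (pairDisc dc s k j
          + (if k ∈ U then pairDisc dc (update s k (t k)) k j - pairDisc dc s k j else 0)
          + (if j ∈ U then pairDisc dc (update s j (t j)) j k - pairDisc dc s j k else 0)) :=
        sum_le_sum fun k _ => sum_le_sum fun j _ => pairDisc_piecewise_le hdc hsym hU k j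
    _ = _ := by
        simp only [sum_add_distrib]
        rw [sum_comm (f := fun k j => if j ∈ U then _ else _)]
        simp only [hrow, sum_ite_mem, univ_inter, dis]
        ring

lemma sum_dis_update_le (hdc : ∀ i j, 0 ≤ dc i j) (hsym : ∀ i j, dc i j = dc j i)
    (s : A → Option F) (i : A) (t : Option F) :
    ∑ k, dis dc (update s i t) k
      ≤ ∑ k, dis dc s k + 2 * (dis dc (update s i t) i - dis dc s i) := by
  have h := sum_dis_piecewise_le (dc := dc) (s := s) (t := fun _ => t) (U := {i}) hdc hsym
    (by simp +contextual)
  simpa [← update_eq_piecewise] using h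

/-- A pair disconnected in `x` is disconnected after one of its two single moves from `σ`,
or already in `σ`. -/
lemma sum_dis_le (hdc : ∀ i j, 0 ≤ dc i j) (hsym : ∀ i j, dc i j = dc j i)
    (σ x : A → Option F) :
    ∑ k, dis dc x k ≤ 2 * ∑ k, dis dc (update σ k (x k)) k + ∑ k, dis dc σ k := by
  have key : ∀ k j, pairDisc dc x k j ≤ pairDisc dc (update σ k (x k)) k j
      + pairDisc dc (update σ j (x j)) j k + pairDisc dc σ k j := by
    intro k j
    have h₁ := pairDisc_nonneg hdc (update σ k (x k)) k j
    have h₂ := pairDisc_nonneg hdc (update σ j (x j)) j k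
    have h₃ := pairDisc_nonneg hdc σ k j
    obtain rfl | hkj := eq_or_ne k j
    · rw [pairDisc_self]; linarith
    have hle := pairDisc_le hdc x k j
    by_cases c₁ : conn (update σ k (x k)) k j
    · by_cases c₂ : conn (update σ j (x j)) j k
      · by_cases c₃ : conn σ k j
        · rw [pairDisc_of_conn (conn_of_conn_update hkj c₁ c₂ c₃)]; linarith
        · rw [pairDisc_of_not_conn hkj c₃]; linarith
      · rw [pairDisc_of_not_conn hkj.symm c₂, ← hsym]; linarith
    · rw [pairDisc_of_not_conn hkj c₁]; linarith
  calc ∑ k, dis dc x k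
      ≤ ∑ k, ∑ j, (pairDisc dc (update σ k (x k)) k j
          + pairDisc dc (update σ j (x j)) j k + pairDisc dc σ k j) :=
        sum_le_sum fun k _ => sum_le_sum fun j _ => key k j
    _ = _ := by
        simp only [sum_add_distrib]
        rw [sum_comm (f := fun k j => pairDisc dc (update σ j (x j)) j k)]
        simp only [dis]
        ring

lemma sum_cc_piecewise (cc : A → Option F → ℝ) (s t : A → Option F) (U : Finset A) :
    ∑ k, cc k (U.piecewise t s k)
      = ∑ k, cc k (s k) + ∑ k ∈ U, (cc k (t k) - cc k (s k)) := by
  have h : ∀ k, cc k (U.piecewise t s k) - cc k (s k)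
      = if k ∈ U then cc k (t k) - cc k (s k) else 0 := by
    intro k; by_cases hk : k ∈ U <;> simp [hk]
  have hsum := sum_congr rfl fun k (_ : k ∈ univ) => h k
  rw [sum_ite_mem, univ_inter, sum_sub_distrib] at hsum
  linarith

lemma sum_cc_update (cc : A → Option F → ℝ) (s : A → Option F) (i : A) (t : Option F) :
    ∑ k, cc k (update s i t k) = ∑ k, cc k (s k) + (cc i t - cc i (s i)) := by
  simp [update_eq_piecewise, sum_cc_piecewise]

lemma Phi0_piecewise_le {cc : A → Option F → ℝ} (hdc : ∀ i j, 0 ≤ dc i j)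
    (hsym : ∀ i j, dc i j = dc j i) {s t : A → Option F} {U : Finset A}
    (hU : ∀ k ∈ U, ∀ l ∈ U, k ≠ l → conn s k l ∧ ¬ conn (update s k (t k)) k l) :
    Phi0 cc dc (U.piecewise t s)
      ≤ Phi0 cc dc s + ∑ k ∈ U, (ct cc dc (update s k (t k)) k - ct cc dc s k) := by
  have hct : ∀ k, ct cc dc (update s k (t k)) k - ct cc dc s k
      = (cc k (t k) - cc k (s k)) + (dis dc (update s k (t k)) k - dis dc s k) := by
    intro k; rw [ct_eq_add_dis, ct_eq_add_dis, update_self]; ring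
  rw [Phi0_eq_add_dis, Phi0_eq_add_dis, sum_cc_piecewise, sum_congr rfl fun k _ => hct k,
    sum_add_distrib]
  linarith [sum_dis_piecewise_le hdc hsym hU]

end Sums

section FacilityCost

variable [Fintype F] {fc : F → ℝ}

lemma fcost_nonneg (hfc : ∀ f, 0 ≤ fc f) (s : A → Option F) : 0 ≤ fcost fc s :=
  sum_nonneg fun f _ => hfc f

lemma fcost_mono (hfc : ∀ f, 0 ≤ fc f) {s s' : A → Option F}
    (h : ∀ g, (∃ i, s' i = some g) → ∃ i, s i = some g) : fcost fc s' ≤ fcost fc s :=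
  sum_le_sum_of_subset_of_nonneg (fun g hg => by simpa using h g (by simpa using hg))
    fun g _ _ => hfc g

lemma fcost_le_sub (hfc : ∀ f, 0 ≤ fc f) {s s' : A → Option F} {f : F}
    (hf : ∃ i, s i = some f)
    (h : ∀ g, (∃ i, s' i = some g) → g ≠ f ∧ ∃ i, s i = some g) :
    fcost fc s' ≤ fcost fc s - fc f := by
  rw [fcost, fcost, ← sum_erase_eq_sub (by simpa using hf)]
  exact sum_le_sum_of_subset_of_nonneg
    (fun g hg => by simpa using h g (by simpa using hg)) fun g _ _ => hfc g

lemma fcost_update_le [DecidableEq A] (hfc : ∀ f, 0 ≤ fc f) {s : A → Option F}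
    {i : A} {t : Option F} (ht : ∀ g ∈ t, ∃ j, s j = some g) :
    fcost fc (update s i t) ≤ fcost fc s := by
  refine fcost_mono hfc fun g ⟨j, hj⟩ => ?_
  obtain rfl | hji := eq_or_ne j i
  · exact ht g (by simpa using hj)
  · exact ⟨j, by rwa [update_of_ne hji] at hj⟩

end FacilityCost

section SocialCost

variable [Fintype A] [Fintype F] {fc : F → ℝ} {cc : A → Option F → ℝ}
  {dc : A → A → ℝ}

lemma socC_nonneg (hfc : ∀ f, 0 ≤ fc f) (hcc : ∀ i o, 0 ≤ cc i o)
    (hdc : ∀ i j, 0 ≤ dc i j)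
    (s : A → Option F) : 0 ≤ socC fc cc dc s := by
  rw [socC, soc_eq_sum_ct]
  exact add_nonneg (fcost_nonneg hfc s) (sum_nonneg fun i _ =>
    add_nonneg (hcc i (s i)) (sum_nonneg fun j _ => hdc i j))

lemma socC_le_two_mul_PhiC (hfc : ∀ f, 0 ≤ fc f) (hcc : ∀ i o, 0 ≤ cc i o)
    (s : A → Option F) : socC fc cc dc s ≤ 2 * PhiC fc cc dc s := by
  rw [socC, PhiC, soc_eq_add_dis, Phi0_eq_add_dis]
  linarith [fcost_nonneg hfc s, sum_nonneg fun i (_ : i ∈ univ) => hcc i (s i)]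

end SocialCost

lemma exists_budget_balanced_le [Fintype A] {s : A → Option F} {c : F → ℝ} {q : A → ℝ}
    (hc : ∀ f, 0 ≤ c f) (hq : ∀ i, 0 ≤ q i)
    (hcover : ∀ f, (∃ i, s i = some f) →
      c f ≤ ∑ i ∈ univ.filter (fun i => s i = some f), q i) :
    ∃ γ : A → ℝ, (∀ i, 0 ≤ γ i) ∧ (∀ i, s i = none → γ i = 0) ∧
      (∀ f, (∃ i, s i = some f) →
        ∑ i ∈ univ.filter (fun i => s i = some f), γ i = c f) ∧
      ∀ i, γ i ≤ q i := by
  set G : F → ℝ := fun f => ∑ i ∈ univ.filter (fun i => s i = some f), q i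
  have hG : ∀ f, 0 ≤ G f := fun f => sum_nonneg fun i _ => hq i
  set γ : A → ℝ := fun i => (s i).elim 0 fun f => c f / G f * q i
  have hγ : ∀ i f, s i = some f → γ i = c f / G f * q i := fun i f hi => by simp [γ, hi]
  refine ⟨γ, fun i => ?_, fun i hi => by simp [γ, hi], fun f hf => ?_, fun i => ?_⟩
  · rcases hi : s i with _ | f
    · simp [γ, hi]
    · rw [hγ i f hi]
      exact mul_nonneg (div_nonneg (hc f) (hG f)) (hq i)
  · rw [sum_congr rfl fun i hi => hγ i f (mem_filter.1 hi).2, ← mul_sum]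
    obtain hG0 | hG0 := eq_or_ne (G f) 0
    · simp [le_antisymm (hG0 ▸ hcover f hf) (hc f)]
    · exact div_mul_cancel₀ _ hG0
  · rcases hi : s i with _ | f
    · simpa [γ, hi] using hq i
    · rw [hγ i f hi]
      exact mul_le_of_le_one_left (hq i) (div_le_one_of_le₀ (hcover f ⟨i, hi⟩) (hG f))

section Game

variable [Fintype A] [DecidableEq A] {cc : A → Option F → ℝ} {dc : A → A → ℝ}

lemma ct_update_none_le (hcc0 : ∀ i, cc i none = 0) (hcc : ∀ i o, 0 ≤ cc i o)
    {s : A → Option F} {i : A} {g : F} (hg : ∀ j ≠ i, s j ≠ some g) :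
    ct cc dc (update s i none) i ≤ ct cc dc (update s i (some g)) i := by
  have hdis : dis dc (update s i none) i = dis dc (update s i (some g)) i := by
    refine sum_congr rfl fun j _ => ?_
    obtain rfl | hij := eq_or_ne i j
    · rw [pairDisc_self, pairDisc_self]
    rw [pairDisc_of_not_conn hij, pairDisc_of_not_conn hij]
    · rintro ⟨f, hi, hj⟩
      rw [update_self] at hi
      rw [update_of_ne hij.symm, ← hi] at hj
      exact hg j hij.symm hj
    · rintro ⟨f, hi, -⟩
      simp at hi
  rw [ct_eq_add_dis, ct_eq_add_dis, update_self, update_self, hdis, hcc0]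
  linarith [hcc i (some g)]

lemma exists_open_ct_update_le (hcc0 : ∀ i, cc i none = 0) (hcc : ∀ i o, 0 ≤ cc i o)
    (s : A → Option F) (i : A) (t : Option F) :
    ∃ t', (t' = t ∨ t' = none) ∧ (∀ g ∈ t', ∃ j, s j = some g) ∧
      ct cc dc (update s i t') i ≤ ct cc dc (update s i t) i := by
  by_cases ht : ∀ g ∈ t, ∃ j, s j = some g
  · exact ⟨t, Or.inl rfl, ht, le_rfl⟩
  push Not at ht
  obtain ⟨g, rfl, hg⟩ := ht
  exact ⟨none, Or.inr rfl, by simp, ct_update_none_le hcc0 hcc fun j _ => hg j⟩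

variable [Fintype F] {fc : F → ℝ}

lemma exists_best_open_deviation (hcc0 : ∀ i, cc i none = 0) (hcc : ∀ i o, 0 ≤ cc i o)
    (s : A → Option F) {i : A} (hi : s i ≠ none) :
    ∃ t, t ≠ s i ∧ (∀ g ∈ t, ∃ j, s j = some g) ∧
      ∀ t' ≠ s i, ct cc dc (update s i t) i ≤ ct cc dc (update s i t') i := by
  obtain ⟨t₀, ht₀, hmin⟩ := (univ.filter (· ≠ s i)).exists_min_image
    (fun t => ct cc dc (update s i t) i) ⟨none, by simpa using hi.symm⟩
  obtain ⟨t, hor, hopen, hle⟩ := exists_open_ct_update_le (dc := dc) hcc0 hcc s i t₀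
  refine ⟨t, ?_, hopen, fun t' ht' => hle.trans (hmin t' (by simpa using ht'))⟩
  rcases hor with rfl | rfl
  · simpa using ht₀
  · exact hi.symm

lemma ct_le_ct_update_of_forall_PhiC_le (hfc : ∀ f, 0 ≤ fc f) (hcc0 : ∀ i, cc i none = 0)
    (hcc : ∀ i o, 0 ≤ cc i o) (hdc : ∀ i j, 0 ≤ dc i j) (hsym : ∀ i j, dc i j = dc j i)
    {s : A → Option F} (hmin : ∀ x, PhiC fc cc dc s ≤ PhiC fc cc dc x)
    (i : A) (t : Option F) :
    ct cc dc s i ≤ ct cc dc (update s i t) i := by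
  obtain ⟨t', -, hopen, hle⟩ := exists_open_ct_update_le (dc := dc) hcc0 hcc s i t
  have hmove := hmin (update s i t')
  simp only [PhiC, Phi0_eq_add_dis, sum_cc_update] at hmove
  simp only [ct_eq_add_dis, update_self] at hle ⊢
  linarith [fcost_update_le (i := i) hfc hopen, sum_dis_update_le hdc hsym s i t']

lemma fc_le_sum_ct_update_sub (hfc : ∀ f, 0 ≤ fc f) (hdc : ∀ i j, 0 ≤ dc i j)
    (hsym : ∀ i j, dc i j = dc j i) {s : A → Option F}
    (hmin : ∀ x, PhiC fc cc dc s ≤ PhiC fc cc dc x) {f : F} (hf : ∃ i, s i = some f)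
    {t : A → Option F}
    (ht : ∀ i, s i = some f → t i ≠ s i ∧ ∀ g ∈ t i, ∃ j, s j = some g) :
    fc f ≤ ∑ i ∈ univ.filter (fun i => s i = some f),
      (ct cc dc (update s i (t i)) i - ct cc dc s i) := by
  set U := univ.filter (fun i => s i = some f)
  have hmemU : ∀ i, i ∈ U ↔ s i = some f := fun i => by simp [U]
  have hU : ∀ k ∈ U, ∀ l ∈ U, k ≠ l →
      conn s k l ∧ ¬ conn (update s k (t k)) k l := by
    intro k hk l hl hkl
    rw [hmemU] at hk hl
    refine ⟨⟨f, hk, hl⟩, fun ⟨g, hkg, hlg⟩ => (ht k hk).1 ?_⟩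
    rw [update_self] at hkg
    rw [update_of_ne hkl.symm, hl] at hlg
    rw [hkg, ← hlg, hk]
  have hfcost : fcost fc (U.piecewise t s) ≤ fcost fc s - fc f := by
    refine fcost_le_sub hfc hf fun g ⟨j, hj⟩ => ?_
    by_cases hjU : j ∈ U
    · rw [piecewise_eq_of_mem _ _ _ hjU] at hj
      obtain ⟨hne, hopen⟩ := ht j ((hmemU j).1 hjU)
      exact ⟨fun hgf => hne (by rw [hj, hgf, (hmemU j).1 hjU]), hopen g hj⟩
    · rw [piecewise_eq_of_notMem _ _ _ hjU] at hj
      exact ⟨fun hgf => hjU ((hmemU j).2 (hgf ▸ hj)), j, hj⟩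
  have hmove := hmin (U.piecewise t s)
  have hΦ := Phi0_piecewise_le (cc := cc) hdc hsym hU
  simp only [PhiC] at hmove
  linarith

lemma exists_stable_of_forall_PhiC_le (hfc : ∀ f, 0 ≤ fc f) (hcc0 : ∀ i, cc i none = 0)
    (hcc : ∀ i o, 0 ≤ cc i o) (hdc : ∀ i j, 0 ≤ dc i j) (hsym : ∀ i j, dc i j = dc j i)
    {s : A → Option F} (hmin : ∀ x, PhiC fc cc dc s ≤ PhiC fc cc dc x) :
    ∃ γ, Stable fc cc dc s γ := by
  have hdev : ∀ i, ∃ t, s i ≠ none → t ≠ s i ∧ (∀ g ∈ t, ∃ j, s j = some g) ∧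
      ∀ t' ≠ s i, ct cc dc (update s i t) i ≤ ct cc dc (update s i t') i := fun i => by
    by_cases hi : s i = none
    · exact ⟨none, fun h => (h hi).elim⟩
    · obtain ⟨t, ht⟩ := exists_best_open_deviation (dc := dc) hcc0 hcc s hi
      exact ⟨t, fun _ => ht⟩
  choose t ht using hdev
  have hstay := ct_le_ct_update_of_forall_PhiC_le hfc hcc0 hcc hdc hsym hmin
  obtain ⟨γ, hγ0, hγnone, hbal, hγq⟩ := exists_budget_balanced_le (s := s) hfc
    (q := fun i => ct cc dc (update s i (t i)) i - ct cc dc s i)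
    (fun i => sub_nonneg.2 (hstay i (t i)))
    (fun f hf => fc_le_sum_ct_update_sub hfc hdc hsym hmin hf fun i hi =>
      have hi' := ht i (by simp [hi])
      ⟨hi'.1, hi'.2.1⟩)
  refine ⟨γ, hγ0, hγnone, hbal, fun i s' hs' => ?_⟩
  by_cases hi : s i = none
  · rw [hγnone i hi, add_zero]
    exact hstay i s'
  · linarith [hγq i, (ht i hi).2.2 s' hs']

lemma two_mul_ct_sub_cc_le_of_forall_socC_le (hfc : ∀ f, 0 ≤ fc f)
    (hcc0 : ∀ i, cc i none = 0) (hcc : ∀ i o, 0 ≤ cc i o) (hdc : ∀ i j, 0 ≤ dc i j)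
    (hsym : ∀ i j, dc i j = dc j i) {σ : A → Option F}
    (hopt : ∀ s, socC fc cc dc σ ≤ socC fc cc dc s) (i : A) (t : Option F) :
    2 * ct cc dc σ i - cc i (σ i) ≤ 2 * ct cc dc (update σ i t) i := by
  obtain ⟨t', -, hopen, hle⟩ := exists_open_ct_update_le (dc := dc) hcc0 hcc σ i t
  have hmove := hopt (update σ i t')
  simp only [socC, soc_eq_add_dis, sum_cc_update] at hmove
  simp only [ct_eq_add_dis, update_self] at hle ⊢
  linarith [fcost_update_le (i := i) hfc hopen, sum_dis_update_le hdc hsym σ i t', hcc i t']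

lemma exists_PhiC_le_of_forall_socC_le (hfc : ∀ f, 0 ≤ fc f) (hcc0 : ∀ i, cc i none = 0)
    (hcc : ∀ i o, 0 ≤ cc i o) (hdc : ∀ i j, 0 ≤ dc i j) (hsym : ∀ i j, dc i j = dc j i)
    {σ : A → Option F} (hopt : ∀ s, socC fc cc dc σ ≤ socC fc cc dc s)
    {x : A → Option F} (hx : ∀ i, ∀ g ∈ x i, ∃ j, σ j = some g) :
    ∃ y, 4 * PhiC fc cc dc y ≤ 5 * (fcost fc σ + ∑ i, ct cc dc (update σ i (x i)) i) := by
  have hB : ∑ i, ct cc dc (update σ i (x i)) i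
      = ∑ i, cc i (x i) + ∑ i, dis dc (update σ i (x i)) i := by
    simp only [ct_eq_add_dis, update_self, sum_add_distrib]
  have hσ : ∑ i, cc i (σ i) + 2 * ∑ i, dis dc σ i
      ≤ 2 * ∑ i, ct cc dc (update σ i (x i)) i := by
    have h := sum_le_sum fun i (_ : i ∈ univ) =>
      two_mul_ct_sub_cc_le_of_forall_socC_le hfc hcc0 hcc hdc hsym hopt i (x i)
    simp only [ct_eq_add_dis cc σ, sum_sub_distrib, ← mul_sum, sum_add_distrib] at h
    linarith
  have hF := fcost_nonneg hfc σ
  by_cases hH : 2 * ∑ i, dis dc σ i ≤ fcost fc σ + ∑ i, ct cc dc (update σ i (x i)) i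
  · refine ⟨x, ?_⟩
    have hfx : fcost fc x ≤ fcost fc σ := fcost_mono hfc fun g ⟨i, hi⟩ => hx i g hi
    rw [PhiC, Phi0_eq_add_dis]
    linarith [sum_dis_le hdc hsym σ x]
  · refine ⟨σ, ?_⟩
    rw [PhiC, Phi0_eq_add_dis]
    linarith

end Game

lemma div_le_one_sub_mul_sInf {X Y : Type*} {P : X → Y → Prop} {g : X → ℝ}
    (hg : ∀ x, 0 ≤ g x) {c Δ κ : ℝ} (hc : 0 ≤ c) (hκ : 0 ≤ κ) {x₀ : X} {y₀ : Y}
    (h₀ : P x₀ y₀) (hle : κ * g x₀ ≤ c - Δ) :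
    Δ / c ≤ 1 - κ * sInf {r | ∃ x y, P x y ∧ r = g x / c} := by
  obtain rfl | hc := hc.eq_or_lt
  · have : sInf {r | ∃ x y, P x y ∧ r = g x / 0} ≤ 0 :=
      Real.sInf_nonpos fun r ⟨_, _, _, hr⟩ => by simp [hr]
    rw [div_zero]
    nlinarith
  have hinf : sInf {r | ∃ x y, P x y ∧ r = g x / c} ≤ g x₀ / c :=
    csInf_le ⟨0, fun r ⟨x, _, _, hr⟩ => hr ▸ div_nonneg (hg x) hc.le⟩
      ⟨x₀, y₀, h₀, rfl⟩
  calc Δ / c = 1 - (c - Δ) / c := by field_simp; ring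
    _ ≤ 1 - κ * g x₀ / c := by gcongr
    _ ≤ 1 - κ * sInf {r | ∃ x y, P x y ∧ r = g x / c} := by
        rw [mul_div_assoc]; gcongr

theorem payment_vs_pos_tradeoff_general [Fintype A] [Fintype F] [DecidableEq A]
    (fc : F → ℝ) (cc : A → Option F → ℝ) (dc : A → A → ℝ)
    (hfc : ∀ f, 0 ≤ fc f) (hcc0 : ∀ i, cc i none = 0) (hcc : ∀ i o, 0 ≤ cc i o)
    (hdc : ∀ i j, 0 ≤ dc i j) (hsym : ∀ i j, dc i j = dc j i)
    (sstar : A → Option F) (hopt : ∀ s, socC fc cc dc sstar ≤ socC fc cc dc s)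
    (b : A → Option F) :
    (∑ i, (ct cc dc sstar i - ct cc dc (Function.update sstar i (b i)) i))
        / socC fc cc dc sstar
      ≤ 1 - (2 / 5) * sInf {r : ℝ | ∃ s γ, Stable fc cc dc s γ ∧
          r = socC fc cc dc s / socC fc cc dc sstar} := by
  obtain ⟨sh, hmin⟩ := Finite.exists_min (PhiC fc cc dc)
  obtain ⟨γ, hstab⟩ := exists_stable_of_forall_PhiC_le hfc hcc0 hcc hdc hsym hmin
  choose b' _ hb'open hb'le using fun i =>
    exists_open_ct_update_le (dc := dc) hcc0 hcc sstar i (b i)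
  obtain ⟨x, hx⟩ := exists_PhiC_le_of_forall_socC_le hfc hcc0 hcc hdc hsym hopt hb'open
  refine div_le_one_sub_mul_sInf (P := fun s γ => Stable fc cc dc s γ)
    (socC_nonneg hfc hcc hdc) (socC_nonneg hfc hcc hdc sstar) (by norm_num) hstab ?_
  have hstar : socC fc cc dc sstar = fcost fc sstar + ∑ i, ct cc dc sstar i := by
    rw [socC, soc_eq_sum_ct]
  rw [hstar, sum_sub_distrib]
  linarith [socC_le_two_mul_PhiC (dc := dc) hfc hcc sh, hmin x,
    sum_le_sum fun i (_ : i ∈ univ) => hb'le i]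

/-- payment-vs-PoS tradeoff: for every instance,
`Δ/c(s*) ≤ 1 − (2/5)·PoS`, where `s*` minimizes social cost, `b i` is a best response
of agent `i` against `s*_{-i}`, `Δ = Σ_i (c̃_i(s*) − c̃_i(b_i, s*_{-i}))` is the total
payment needed to stabilize `s*`, and `PoS` is the infimum of `c(ŝ)/c(s*)` over all
stable states `(ŝ, γ)`. -/
theorem payment_vs_pos_tradeoff [Fintype A] [Fintype F] [DecidableEq A]
    (fc : F → ℝ) (cc : A → Option F → ℝ) (dc : A → A → ℝ)
    (hfc : ∀ f, 0 ≤ fc f) (hcc0 : ∀ i, cc i none = 0) (hcc : ∀ i o, 0 ≤ cc i o)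
    (hdc : ∀ i j, 0 ≤ dc i j) (hsym : ∀ i j, dc i j = dc j i)
    (sstar : A → Option F) (hopt : ∀ s, socC fc cc dc sstar ≤ socC fc cc dc s)
    (b : A → Option F)
    (hb : ∀ i s', ct cc dc (Function.update sstar i (b i)) i
      ≤ ct cc dc (Function.update sstar i s') i) :
    (∑ i, (ct cc dc sstar i - ct cc dc (Function.update sstar i (b i)) i))
        / socC fc cc dc sstar
      ≤ 1 - (2 / 5) * sInf {r : ℝ | ∃ s γ, Stable fc cc dc s γ ∧
          r = socC fc cc dc s / socC fc cc dc sstar} :=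
  payment_vs_pos_tradeoff_general fc cc dc hfc hcc0 hcc hdc hsym sstar hopt b
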